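/- arXiv:1910.11694 — 3 statements merged into one kernel-verified Lean document; each statement's English description precedes it below -/
import Mathlib

section
/- Let P be a 2n×2n orthogonal symplectic matrix with ker(P − I) = 0, and define for u ∈ L²((0,s), ℝ^{2n}) the map (Π_s u)(t) = ∫₀ᵗ u(τ) dτ + (P − I)⁻¹ ∫₀ˢ u(τ) dτ. Then Π_s is antisymmetric with respect to the L² inner product: ∫₀ˢ (Π_s u, v) dt = − ∫₀ˢ (u, Π_s v) dt for all u, v ∈ L². -/
/-!
Write `Π_s u = U + M A` with `U t = ∫₀ᵗ u`, `A = ∫₀ˢ u` and `M = (P - I)⁻¹`, and similarly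
`Π_s v = V + M B`. The primitives `U`, `V` are absolutely continuous, so integration by parts gives
`∫₀ˢ (U, v) + (u, V) = (A, B)`. Since `P` is orthogonal, `(P - I)ᵀ = -Pᵀ (P - I)`, hence
`Mᵀ = -M P` and `M + Mᵀ = -M (P - I) = -I`; therefore `(M A, B) + (A, M B) = -(A, B)`, and the
two contributions cancel.
-/

open Matrix MeasureTheory

/-- The map `Π_s` of Ekeland P-index theory:
`(Π_s u)(t) = ∫₀ᵗ u(τ) dτ + (P − I)⁻¹ ∫₀ˢ u(τ) dτ`. -/
noncomputable def PiMap {n : ℕ} (P : Matrix (Fin n ⊕ Fin n) (Fin n ⊕ Fin n) ℝ)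
    (s : ℝ) (u : ℝ → (Fin n ⊕ Fin n → ℝ)) (t : ℝ) : Fin n ⊕ Fin n → ℝ :=
  (∫ τ in (0:ℝ)..t, u τ) + (P - 1)⁻¹.mulVec (∫ τ in (0:ℝ)..s, u τ)

namespace Matrix

variable {ι : Type*} [Fintype ι] [DecidableEq ι]

theorem isUnit_sub_one_of_eq_zero_of_mulVec_eq_self {K : Type*} [Field K] {P : Matrix ι ι K}
    (hP : ∀ x, P *ᵥ x = x → x = 0) : IsUnit (P - 1) := by
  rw [isUnit_iff_isUnit_det, isUnit_iff_ne_zero]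
  intro hdet
  obtain ⟨x, hx, hPx⟩ := exists_mulVec_eq_zero_iff.2 hdet
  rw [sub_mulVec, one_mulVec, sub_eq_zero] at hPx
  exact hx (hP x hPx)

theorem inv_sub_one_add_transpose_eq_neg_one {R : Type*} [CommRing R] {P : Matrix ι ι R}
    (horth : Pᵀ * P = 1) (hP : IsUnit (P - 1)) : (P - 1)⁻¹ + (P - 1)⁻¹ᵀ = -1 := by
  have hdet := (isUnit_iff_isUnit_det _).1 hP
  have htr : (P - 1)ᵀ = -(Pᵀ * (P - 1)) := by
    rw [transpose_sub, transpose_one, mul_sub, mul_one, horth, neg_sub]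
  have hinv_tr : (P - 1)⁻¹ᵀ = -((P - 1)⁻¹ * P) := by
    rw [transpose_nonsing_inv, htr]
    refine inv_eq_right_inv ?_
    rw [neg_mul_neg, mul_assoc, ← mul_assoc (P - 1), mul_nonsing_inv _ hdet, one_mul, horth]
  rw [hinv_tr, ← sub_eq_add_neg, ← neg_sub, ← mul_sub_one, nonsing_inv_mul _ hdet]

theorem mulVec_dotProduct_add_dotProduct_mulVec {R : Type*} [CommRing R] {M : Matrix ι ι R}
    (hM : M + Mᵀ = -1) (x y : ι → R) : M *ᵥ x ⬝ᵥ y + x ⬝ᵥ M *ᵥ y = -(x ⬝ᵥ y) := by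
  rw [← vecMul_transpose, ← dotProduct_mulVec, ← dotProduct_add, ← add_mulVec, add_comm, hM,
    neg_mulVec, one_mulVec, dotProduct_neg]

end Matrix

namespace intervalIntegral

open Set

variable {a b : ℝ}

theorem integral_primitive_mul_add_mul_primitive {f g : ℝ → ℝ}
    (hf : IntervalIntegrable f volume a b) (hg : IntervalIntegrable g volume a b) :
    ∫ x in a..b, ((∫ t in a..x, f t) * g x + f x * ∫ t in a..x, g t) =
      (∫ x in a..b, f x) * ∫ x in a..b, g x := by
  have hF := hf.absolutelyContinuousOnInterval_intervalIntegral left_mem_uIcc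
  have hG := hg.absolutelyContinuousOnInterval_intervalIntegral left_mem_uIcc
  have hFG := hF.integral_deriv_mul_eq_sub hG
  simp only [integral_same, mul_zero, sub_zero] at hFG
  rw [← hFG]
  refine integral_congr_ae ?_
  filter_upwards [hf.ae_hasDerivAt_integral, hg.ae_hasDerivAt_integral] with x hfx hgx hx
  have hx' := uIoc_subset_uIcc hx
  rw [(hfx hx' a left_mem_uIcc).deriv, (hgx hx' a left_mem_uIcc).deriv, add_comm]

variable {ι : Type*} [Fintype ι]

theorem eval_integral {f : ℝ → ι → ℝ} (hf : IntervalIntegrable f volume a b) (i : ι) :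
    (∫ x in a..b, f x) i = ∫ x in a..b, f x i :=
  ((ContinuousLinearMap.proj (R := ℝ) (φ := fun _ : ι => ℝ) i).intervalIntegral_comp_comm hf).symm

theorem _root_.IntervalIntegrable.eval {f : ℝ → ι → ℝ} (hf : IntervalIntegrable f volume a b)
    (i : ι) : IntervalIntegrable (f · i) volume a b :=
  intervalIntegrable_iff.2 ((intervalIntegrable_iff.1 hf).eval i)

theorem _root_.IntervalIntegrable.continuousOn_dotProduct {F g : ℝ → ι → ℝ}
    (hg : IntervalIntegrable g volume a b) (hF : ContinuousOn F (uIcc a b)) :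
    IntervalIntegrable (fun x => F x ⬝ᵥ g x) volume a b := by
  simpa only [dotProduct, Finset.sum_fn, Function.comp_apply] using
    IntervalIntegrable.sum Finset.univ fun i _ =>
      (hg.eval i).continuousOn_mul ((continuous_apply i).comp_continuousOn hF)

theorem _root_.IntervalIntegrable.dotProduct_continuousOn {f G : ℝ → ι → ℝ}
    (hf : IntervalIntegrable f volume a b) (hG : ContinuousOn G (uIcc a b)) :
    IntervalIntegrable (fun x => f x ⬝ᵥ G x) volume a b := by
  simpa only [dotProduct_comm (f _)] using hf.continuousOn_dotProduct hG

theorem integral_dotProduct_const {f : ℝ → ι → ℝ} (hf : IntervalIntegrable f volume a b)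
    (c : ι → ℝ) : ∫ x in a..b, f x ⬝ᵥ c = (∫ x in a..b, f x) ⬝ᵥ c := by
  simp only [dotProduct, eval_integral hf]
  rw [integral_finsetSum fun i _ => (hf.eval i).mul_const (c i)]
  simp only [integral_mul_const]

theorem integral_const_dotProduct {f : ℝ → ι → ℝ} (hf : IntervalIntegrable f volume a b)
    (c : ι → ℝ) : ∫ x in a..b, c ⬝ᵥ f x = c ⬝ᵥ ∫ x in a..b, f x := by
  simp only [dotProduct_comm c, integral_dotProduct_const hf]

theorem integral_primitive_dotProduct_add_dotProduct_primitive {f g : ℝ → ι → ℝ}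
    (hf : IntervalIntegrable f volume a b) (hg : IntervalIntegrable g volume a b) :
    ∫ x in a..b, ((∫ t in a..x, f t) ⬝ᵥ g x + f x ⬝ᵥ ∫ t in a..x, g t) =
      (∫ x in a..b, f x) ⬝ᵥ ∫ x in a..b, g x := by
  have hcoord : ∀ x ∈ uIcc a b, (∫ t in a..x, f t) ⬝ᵥ g x + f x ⬝ᵥ (∫ t in a..x, g t) =
      ∑ i, ((∫ t in a..x, f t i) * g x i + f x i * ∫ t in a..x, g t i) := fun x hx => by
    have hax : uIcc a x ⊆ uIcc a b := uIcc_subset_uIcc_left hx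
    simp only [dotProduct, eval_integral (hf.mono_set hax), eval_integral (hg.mono_set hax),
      Finset.sum_add_distrib]
  have hint : ∀ i, IntervalIntegrable
      (fun x => (∫ t in a..x, f t i) * g x i + f x i * ∫ t in a..x, g t i) volume a b := fun i =>
    ((hg.eval i).continuousOn_mul (continuousOn_primitive_interval' (hf.eval i) left_mem_uIcc)).add
      ((hf.eval i).mul_continuousOn (continuousOn_primitive_interval' (hg.eval i) left_mem_uIcc))
  rw [integral_congr hcoord, integral_finsetSum fun i _ => hint i]
  simp only [dotProduct, eval_integral hf, eval_integral hg]
  exact Finset.sum_congr rfl fun i _ =>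
    integral_primitive_mul_add_mul_primitive (hf.eval i) (hg.eval i)

end intervalIntegral

theorem stmt1_general (n : ℕ) (P : Matrix (Fin n ⊕ Fin n) (Fin n ⊕ Fin n) ℝ)
    (horth : Pᵀ * P = 1)
    (hker : ∀ x : Fin n ⊕ Fin n → ℝ, P.mulVec x = x → x = 0)
    (s : ℝ) (hs : 0 < s) (u v : ℝ → (Fin n ⊕ Fin n → ℝ))
    (hu : MemLp u 2 (volume.restrict (Set.Ioc 0 s)))
    (hv : MemLp v 2 (volume.restrict (Set.Ioc 0 s))) :
    ∫ t in (0:ℝ)..s, (PiMap P s u t) ⬝ᵥ (v t) =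
      - ∫ t in (0:ℝ)..s, (u t) ⬝ᵥ (PiMap P s v t) := by
  have hu' : IntervalIntegrable u volume 0 s :=
    (intervalIntegrable_iff_integrableOn_Ioc_of_le hs.le).2 (hu.integrable one_le_two)
  have hv' : IntervalIntegrable v volume 0 s :=
    (intervalIntegrable_iff_integrableOn_Ioc_of_le hs.le).2 (hv.integrable one_le_two)
  have hU := intervalIntegral.continuousOn_primitive_interval' hu' Set.left_mem_uIcc
  have hV := intervalIntegral.continuousOn_primitive_interval' hv' Set.left_mem_uIcc
  have hlhs : ∫ t in (0:ℝ)..s, PiMap P s u t ⬝ᵥ v t =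
      (∫ t in (0:ℝ)..s, (∫ τ in (0:ℝ)..t, u τ) ⬝ᵥ v t) +
        (P - 1)⁻¹ *ᵥ (∫ t in (0:ℝ)..s, u t) ⬝ᵥ ∫ t in (0:ℝ)..s, v t := by
    simp only [PiMap, add_dotProduct]
    rw [intervalIntegral.integral_add (hv'.continuousOn_dotProduct hU)
      (hv'.continuousOn_dotProduct continuousOn_const),
      intervalIntegral.integral_const_dotProduct hv']
  have hrhs : ∫ t in (0:ℝ)..s, u t ⬝ᵥ PiMap P s v t =
      (∫ t in (0:ℝ)..s, u t ⬝ᵥ ∫ τ in (0:ℝ)..t, v τ) +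
        (∫ t in (0:ℝ)..s, u t) ⬝ᵥ (P - 1)⁻¹ *ᵥ ∫ t in (0:ℝ)..s, v t := by
    simp only [PiMap, dotProduct_add]
    rw [intervalIntegral.integral_add (hu'.dotProduct_continuousOn hV)
      (hu'.dotProduct_continuousOn continuousOn_const),
      intervalIntegral.integral_dotProduct_const hu']
  have hparts := intervalIntegral.integral_primitive_dotProduct_add_dotProduct_primitive hu' hv'
  rw [intervalIntegral.integral_add (hv'.continuousOn_dotProduct hU)
    (hu'.dotProduct_continuousOn hV)] at hparts
  have hM := mulVec_dotProduct_add_dotProduct_mulVec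
    (inv_sub_one_add_transpose_eq_neg_one horth (isUnit_sub_one_of_eq_zero_of_mulVec_eq_self hker))
    (∫ t in (0:ℝ)..s, u t) (∫ t in (0:ℝ)..s, v t)
  linarith

theorem stmt1 (n : ℕ) (P : Matrix (Fin n ⊕ Fin n) (Fin n ⊕ Fin n) ℝ)
    (J : Matrix (Fin n ⊕ Fin n) (Fin n ⊕ Fin n) ℝ)
    (hJ : J = Matrix.fromBlocks 0 (-1) 1 0)
    (horth : Pᵀ * P = 1) (hsymp : Pᵀ * J * P = J)
    (hker : ∀ x : Fin n ⊕ Fin n → ℝ, P.mulVec x = x → x = 0)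
    (s : ℝ) (hs : 0 < s) (u v : ℝ → (Fin n ⊕ Fin n → ℝ))
    (hu : MemLp u 2 (volume.restrict (Set.Ioc 0 s)))
    (hv : MemLp v 2 (volume.restrict (Set.Ioc 0 s))) :
    ∫ t in (0:ℝ)..s, (PiMap P s u t) ⬝ᵥ (v t) =
      - ∫ t in (0:ℝ)..s, (u t) ⬝ᵥ (PiMap P s v t) :=
  stmt1_general n P horth hker s hs u v hu hv
end

section
/- Let A : [0,∞) → ℝ^{2n×2n} be continuous with A(t) symmetric positive definite for all t, let P ∈ Sp(2n), and let γ be the fundamental solution of ż = J A(t) z with γ(0) = I. Suppose there exist sequences λ_j → λ in [0,s] (with λ_j ≠ λ) and unit vectors ξ_j → ξ in ℝ^{2n} with γ(λ_j) ξ_j = P ξ_j for all j. Then (A(λ) P ξ, P ξ) = 0, contradicting positive definiteness; hence the set {σ ∈ [0,s] : ker(γ(σ) − P) ≠ 0} has no accumulation point, i.e., it is finite. -/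
/-!
Suppose the set is infinite, so it accumulates at some `t₀ ∈ [0, s]`. Along a filter converging to
`t₀` from `σ ≠ t₀`, compactness of the unit sphere yields unit vectors `ξ σ → ξ₀` with
`γ σ ξ σ = P ξ σ`, hence `γ t₀ ξ₀ = P ξ₀`. Put `ω u v = u ⬝ᵥ J v`. Since `A` is symmetric, the flow
`γ σ` preserves `ω`, and so does `P`; therefore
`ω (P ξ σ) (γ σ ξ₀ - γ t₀ ξ₀) = ω (ξ σ) ξ₀ - ω (ξ σ) ξ₀ = 0`. Dividing by `σ - t₀` and passing to
the limit gives `ω (P ξ₀) (J A t₀ P ξ₀) = -(P ξ₀ ⬝ᵥ A t₀ P ξ₀) = 0`, contradicting positive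
definiteness because `P` is invertible.
-/

open Matrix Filter Topology Metric Set

section Calculus

variable {𝕜 ι κ : Type*} [NontriviallyNormedField 𝕜] [Fintype ι]

theorem HasDerivAt.dotProduct {f g : 𝕜 → ι → 𝕜} {f' g' : ι → 𝕜} {t : 𝕜}
    (hf : HasDerivAt f f' t) (hg : HasDerivAt g g' t) :
    HasDerivAt (fun τ => f τ ⬝ᵥ g τ) (f' ⬝ᵥ g t + f t ⬝ᵥ g') t := by
  show HasDerivAt (fun τ => ∑ i, f τ i * g τ i) (∑ i, f' i * g t i + ∑ i, f t i * g' i) t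
  rw [← Finset.sum_add_distrib]
  exact HasDerivAt.fun_sum fun i _ => (hasDerivAt_pi.1 hf i).mul (hasDerivAt_pi.1 hg i)

theorem HasDerivAt.const_mulVec (M : Matrix κ ι 𝕜) {f : 𝕜 → ι → 𝕜} {f' : ι → 𝕜} {t : 𝕜}
    (hf : HasDerivAt f f' t) : HasDerivAt (fun τ => M *ᵥ f τ) (M *ᵥ f') t :=
  hasDerivAt_pi.2 fun i => HasDerivAt.fun_sum fun j _ => (hasDerivAt_pi.1 hf j).const_mul (M i j)

theorem continuousAt_of_forall_differentiableAt_mulVec [DecidableEq ι] {γ : 𝕜 → Matrix κ ι 𝕜}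
    {t : 𝕜} (h : ∀ c, DifferentiableAt 𝕜 (fun τ => γ τ *ᵥ c) t) : ContinuousAt γ t := by
  refine continuousAt_pi.2 fun i => continuousAt_pi.2 fun j => ?_
  simpa [mulVec_single_one] using continuousAt_pi.1 (h (Pi.single j 1)).continuousAt i

end Calculus

section Bilinear

variable {R ι : Type*} [CommSemiring R] [Fintype ι]

theorem dotProduct_transpose_mul_mul_mulVec (M N : Matrix ι ι R) (u v : ι → R) :
    u ⬝ᵥ (Mᵀ * N * M) *ᵥ v = (M *ᵥ u) ⬝ᵥ N *ᵥ (M *ᵥ v) := by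
  rw [← mulVec_mulVec, ← mulVec_mulVec, dotProduct_mulVec u, vecMul_transpose]

theorem Matrix.ext_of_dotProduct_mulVec [DecidableEq ι] {X Y : Matrix ι ι R}
    (h : ∀ u v, u ⬝ᵥ X *ᵥ v = u ⬝ᵥ Y *ᵥ v) : X = Y := by
  ext i j
  simpa [mulVec_single_one, single_one_dotProduct] using h (Pi.single i 1) (Pi.single j 1)

end Bilinear

section Symplectic

variable {ι : Type*} [Fintype ι] [DecidableEq ι] {J P : Matrix ι ι ℝ}

theorem mul_eq_one_of_transpose_mul_mul_eq (hJJ : J * J = -1) (hP : Pᵀ * J * P = J) :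
    -(J * Pᵀ * J) * P = 1 := by
  rw [neg_mul, Matrix.mul_assoc, Matrix.mul_assoc, ← Matrix.mul_assoc Pᵀ, hP, hJJ, neg_neg]

theorem transpose_mul_mul_self_eq_of_hasDerivAt (hJt : Jᵀ = -J)
    (hJJ : J * J = -1) {A γ : ℝ → Matrix ι ι ℝ} (hA : ∀ t ∈ Ici (0 : ℝ), (A t).IsSymm)
    (hγ0 : γ 0 = 1)
    (hγ : ∀ c, ∀ t ∈ Ici (0 : ℝ), HasDerivAt (fun τ => γ τ *ᵥ c) (J *ᵥ A t *ᵥ γ t *ᵥ c) t)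
    {t : ℝ} (ht : 0 ≤ t) : (γ t)ᵀ * J * γ t = J := by
  refine ext_of_dotProduct_mulVec fun u v => ?_
  have hω : ∀ τ ∈ Ici (0 : ℝ), HasDerivAt (fun τ => (γ τ *ᵥ u) ⬝ᵥ J *ᵥ (γ τ *ᵥ v)) 0 τ := by
    intro τ hτ
    -- `ω (J A x) y + ω x (J A y) = A x ⬝ᵥ y - x ⬝ᵥ A y`, using `Jᵀ J = 1` and `J J = -1`
    refine ((hγ u τ hτ).dotProduct ((hγ v τ hτ).const_mulVec J)).congr_deriv ?_
    rw [← dotProduct_transpose_mulVec, mulVec_mulVec (M := Jᵀ), hJt, neg_mul, hJJ, neg_neg,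
      one_mulVec, mulVec_mulVec (M := J), hJJ, neg_mulVec, one_mulVec, dotProduct_neg,
      ← dotProduct_transpose_mulVec, (hA τ hτ).eq, add_neg_cancel]
  have := constant_of_has_deriv_right_zero
    (fun τ hτ => (hω τ hτ.1).continuousAt.continuousWithinAt)
    (fun τ hτ => (hω τ hτ.1).hasDerivWithinAt) t ⟨ht, le_rfl⟩
  simpa [dotProduct_transpose_mul_mul_mulVec, hγ0] using this

end Symplectic

section Limits

variable {ι α : Type*} [Fintype ι] {l : Filter α} [l.NeBot] {σ : α → ℝ} {ξ : α → ι → ℝ}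
  {γ : ℝ → Matrix ι ι ℝ} {J P : Matrix ι ι ℝ} {t₀ : ℝ} {ξ₀ : ι → ℝ}

theorem mulVec_eq_of_tendsto (hγ : ContinuousAt γ t₀) (hσ : Tendsto σ l (𝓝 t₀))
    (hξ : Tendsto ξ l (𝓝 ξ₀)) (hfix : ∀ᶠ a in l, γ (σ a) *ᵥ ξ a = P *ᵥ ξ a) :
    γ t₀ *ᵥ ξ₀ = P *ᵥ ξ₀ := by
  have hγξ : Tendsto (fun a => γ (σ a) *ᵥ ξ a) l (𝓝 (γ t₀ *ᵥ ξ₀)) :=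
    ((continuous_fst.matrix_mulVec continuous_snd).tendsto (γ t₀, ξ₀)).comp
      ((hγ.tendsto.comp hσ).prodMk_nhds hξ)
  have hPξ : Tendsto (fun a => P *ᵥ ξ a) l (𝓝 (P *ᵥ ξ₀)) :=
    ((continuous_const.matrix_mulVec continuous_id).tendsto ξ₀).comp hξ
  exact tendsto_nhds_unique (hγξ.congr' hfix) hPξ

theorem dotProduct_mulVec_deriv_eq_zero {v : ι → ℝ} (hP : Pᵀ * J * P = J)
    (hσ : Tendsto σ l (𝓝[≠] t₀)) (hξ : Tendsto ξ l (𝓝 ξ₀))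
    (hsymp : ∀ᶠ a in l, (γ (σ a))ᵀ * J * γ (σ a) = J)
    (hfix : ∀ᶠ a in l, γ (σ a) *ᵥ ξ a = P *ᵥ ξ a) (hfix₀ : γ t₀ *ᵥ ξ₀ = P *ᵥ ξ₀)
    (hderiv : HasDerivAt (fun t => γ t *ᵥ ξ₀) v t₀) :
    (P *ᵥ ξ₀) ⬝ᵥ J *ᵥ v = 0 := by
  let q := slope (fun t => γ t *ᵥ ξ₀) t₀
  have hq : Tendsto (fun a => q (σ a)) l (𝓝 v) :=
    (hasDerivAt_iff_tendsto_slope.1 hderiv).comp hσ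
  have hω : Continuous fun p : (ι → ℝ) × (ι → ℝ) => (P *ᵥ p.1) ⬝ᵥ J *ᵥ p.2 :=
    (continuous_const.matrix_mulVec continuous_fst).dotProduct
      (continuous_const.matrix_mulVec continuous_snd)
  have hlim : Tendsto (fun a => (P *ᵥ ξ a) ⬝ᵥ J *ᵥ q (σ a)) l (𝓝 ((P *ᵥ ξ₀) ⬝ᵥ J *ᵥ v)) :=
    hω.continuousAt.tendsto.comp (f := fun a => (ξ a, q (σ a))) (hξ.prodMk_nhds hq)
  refine tendsto_nhds_unique hlim (tendsto_const_nhds.congr' ?_)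
  filter_upwards [hsymp, hfix] with a hsa hfa
  have h₁ : (P *ᵥ ξ a) ⬝ᵥ J *ᵥ (γ (σ a) *ᵥ ξ₀) = ξ a ⬝ᵥ J *ᵥ ξ₀ := by
    rw [← hfa, ← dotProduct_transpose_mul_mul_mulVec, hsa]
  have h₂ : (P *ᵥ ξ a) ⬝ᵥ J *ᵥ (γ t₀ *ᵥ ξ₀) = ξ a ⬝ᵥ J *ᵥ ξ₀ := by
    rw [hfix₀, ← dotProduct_transpose_mul_mul_mulVec, hP]
  simp only [q]
  rw [slope_def_module, mulVec_smul, dotProduct_smul, mulVec_sub, dotProduct_sub, h₁, h₂,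
    sub_self, smul_zero]

end Limits

theorem dotProduct_mulVec_eq_zero_of_tendsto_fixed {ι α : Type*} [Fintype ι] [DecidableEq ι]
    {J P : Matrix ι ι ℝ} {A γ : ℝ → Matrix ι ι ℝ} (hJt : Jᵀ = -J) (hJJ : J * J = -1)
    (hA : ∀ t ∈ Ici (0 : ℝ), (A t).IsSymm) (hγ0 : γ 0 = 1)
    (hγ : ∀ c, ∀ t ∈ Ici (0 : ℝ), HasDerivAt (fun τ => γ τ *ᵥ c) (J *ᵥ A t *ᵥ γ t *ᵥ c) t)
    (hP : Pᵀ * J * P = J) {l : Filter α} [l.NeBot] {σ : α → ℝ} {ξ : α → ι → ℝ} {t₀ : ℝ}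
    {ξ₀ : ι → ℝ} (ht₀ : 0 ≤ t₀) (hσ : Tendsto σ l (𝓝[≠] t₀)) (hσ0 : ∀ᶠ a in l, 0 ≤ σ a)
    (hξ : Tendsto ξ l (𝓝 ξ₀)) (hfix : ∀ᶠ a in l, γ (σ a) *ᵥ ξ a = P *ᵥ ξ a) :
    (P *ᵥ ξ₀) ⬝ᵥ A t₀ *ᵥ (P *ᵥ ξ₀) = 0 := by
  have hfix₀ : γ t₀ *ᵥ ξ₀ = P *ᵥ ξ₀ :=
    mulVec_eq_of_tendsto
      (continuousAt_of_forall_differentiableAt_mulVec fun c => (hγ c t₀ ht₀).differentiableAt)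
      (tendsto_nhds_of_tendsto_nhdsWithin hσ) hξ hfix
  have hsymp : ∀ᶠ a in l, (γ (σ a))ᵀ * J * γ (σ a) = J :=
    hσ0.mono fun a ha => transpose_mul_mul_self_eq_of_hasDerivAt hJt hJJ hA hγ0 hγ ha
  have h := dotProduct_mulVec_deriv_eq_zero hP hσ hξ hsymp hfix hfix₀ (hγ ξ₀ t₀ ht₀)
  rwa [hfix₀, mulVec_mulVec (M := J), hJJ, neg_mulVec, one_mulVec, dotProduct_neg,
    neg_eq_zero] at h

theorem stmt6_general (n : ℕ) (s : ℝ)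
    (J : Matrix (Fin n ⊕ Fin n) (Fin n ⊕ Fin n) ℝ)
    (hJ : J = Matrix.fromBlocks 0 (-1) 1 0)
    (A : ℝ → Matrix (Fin n ⊕ Fin n) (Fin n ⊕ Fin n) ℝ)
    (hpos : ∀ t ∈ Set.Ici (0:ℝ), (A t).PosDef)
    (P : Matrix (Fin n ⊕ Fin n) (Fin n ⊕ Fin n) ℝ)
    (hsymp : Pᵀ * J * P = J)
    (γ : ℝ → Matrix (Fin n ⊕ Fin n) (Fin n ⊕ Fin n) ℝ)
    (hγ0 : γ 0 = 1)
    (hγ : ∀ c : Fin n ⊕ Fin n → ℝ, ∀ t ∈ Set.Ici (0:ℝ),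
      HasDerivAt (fun τ => (γ τ).mulVec c) (J.mulVec ((A t).mulVec ((γ t).mulVec c))) t) :
    {σ ∈ Set.Icc (0:ℝ) s |
      ∃ ξ : Fin n ⊕ Fin n → ℝ, ξ ≠ 0 ∧ (γ σ).mulVec ξ = P.mulVec ξ}.Finite := by
  have hJt : Jᵀ = -J := hJ ▸ J_transpose (Fin n) ℝ
  have hJJ : J * J = -1 := hJ ▸ J_squared (Fin n) ℝ
  set S := {σ ∈ Set.Icc (0:ℝ) s | ∃ ξ : Fin n ⊕ Fin n → ℝ, ξ ≠ 0 ∧ (γ σ).mulVec ξ = P.mulVec ξ}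
  by_contra hS
  obtain ⟨t₀, ht₀, hacc⟩ := Set.Infinite.exists_accPt_of_subset_isCompact hS isCompact_Icc
    (sep_subset _ _)
  have hunit : ∀ σ ∈ S, ∃ ξ ∈ sphere (0 : Fin n ⊕ Fin n → ℝ) 1, γ σ *ᵥ ξ = P *ᵥ ξ :=
    fun σ ⟨_, ξ, hξ, h⟩ => ⟨‖ξ‖⁻¹ • ξ, mem_sphere_zero_iff_norm.2 (norm_smul_inv_norm hξ), by
      rw [mulVec_smul, mulVec_smul, h]⟩
  choose! ξ hξ hfix using hunit
  -- an ultrafilter finer than `𝓝[≠] t₀ ⊓ 𝓟 S` replaces the sequence `σ_j → t₀` of the paper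
  have : (𝓝[≠] t₀ ⊓ 𝓟 S).NeBot := hacc
  let U := Ultrafilter.of (𝓝[≠] t₀ ⊓ 𝓟 S)
  have hUS : ∀ᶠ σ in (U : Filter ℝ), σ ∈ S :=
    Ultrafilter.of_le _ (mem_inf_of_right (mem_principal_self S))
  obtain ⟨ξ₀, hξ₀, hlim⟩ := (isCompact_sphere 0 1).ultrafilter_le_nhds (U.map ξ)
    (le_principal_iff.2 (hUS.mono hξ))
  have hzero := dotProduct_mulVec_eq_zero_of_tendsto_fixed hJt hJJ
    (fun t ht => isHermitian_iff_isSymm.1 (hpos t ht).isHermitian) hγ0 hγ hsymp ht₀.1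
    (σ := id) ((Ultrafilter.of_le _).trans inf_le_left) (hUS.mono fun σ h => h.1.1) hlim
    (hUS.mono hfix)
  have hPξ₀ : P *ᵥ ξ₀ ≠ 0 := fun h => ne_of_mem_sphere hξ₀ one_ne_zero <| by
    rw [← one_mulVec ξ₀, ← mul_eq_one_of_transpose_mul_mul_eq hJJ hsymp, ← mulVec_mulVec, h,
      mulVec_zero]
  have hpos₀ := (hpos t₀ ht₀.1).dotProduct_mulVec_pos hPξ₀
  rw [star_trivial, hzero] at hpos₀
  exact lt_irrefl 0 hpos₀

theorem stmt6 (n : ℕ) (s : ℝ) (hs : 0 < s)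
    (J : Matrix (Fin n ⊕ Fin n) (Fin n ⊕ Fin n) ℝ)
    (hJ : J = Matrix.fromBlocks 0 (-1) 1 0)
    (A : ℝ → Matrix (Fin n ⊕ Fin n) (Fin n ⊕ Fin n) ℝ)
    (hcont : ContinuousOn A (Set.Ici 0))
    (hpos : ∀ t ∈ Set.Ici (0:ℝ), (A t).PosDef)
    (P : Matrix (Fin n ⊕ Fin n) (Fin n ⊕ Fin n) ℝ)
    (hsymp : Pᵀ * J * P = J)
    (γ : ℝ → Matrix (Fin n ⊕ Fin n) (Fin n ⊕ Fin n) ℝ)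
    (hγ0 : γ 0 = 1)
    (hγ : ∀ c : Fin n ⊕ Fin n → ℝ, ∀ t ∈ Set.Ici (0:ℝ),
      HasDerivAt (fun τ => (γ τ).mulVec c) (J.mulVec ((A t).mulVec ((γ t).mulVec c))) t) :
    {σ ∈ Set.Icc (0:ℝ) s |
      ∃ ξ : Fin n ⊕ Fin n → ℝ, ξ ≠ 0 ∧ (γ σ).mulVec ξ = P.mulVec ξ}.Finite :=
  stmt6_general n s J hJ A hpos P hsymp γ hγ0 hγ
end

section
/- Let P be an orthogonal symplectic matrix, H : ℝ^{2n} → ℝ a C² function with H ∘ P = H, and x̄ a solution of ẋ = J H'(x) with x̄(t+1) = P x̄(t) for all t. Let γ be the fundamental solution of ż = J H''(x̄(t)) z with γ(0) = I. Then γ(t+1) = P γ(t) P⁻¹ γ(1) for all t ≥ 0. -/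
/-! Since `H ∘ P = H` with `P` orthogonal, `∇H` and hence the Hessian are `P`-equivariant.
Together with `P J = J P` and `x̄(t + 1) = P x̄(t)`, this makes both `t ↦ γ(t + 1)` and
`t ↦ P γ(t) P⁻¹ γ(1)` solutions of the variational equation along `x̄(t + 1)` with the same value
`γ(1)` at `t = 0`, so they agree by uniqueness for linear ODEs with continuous coefficients. -/

open Matrix

theorem fderiv_apply_equiv_of_commute {𝕜 F : Type*} [NontriviallyNormedField 𝕜]
    [NormedAddCommGroup F] [NormedSpace 𝕜 F] (L : F ≃L[𝕜] F) {G : F → F}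
    (hG : ∀ y, G (L y) = L (G y)) (y w : F) :
    fderiv 𝕜 G (L y) (L w) = L (fderiv 𝕜 G y w) := by
  have hGL : G ∘ L = L ∘ G := funext hG
  have h := congrArg (fun G' => fderiv 𝕜 G' y) hGL
  simp only [L.comp_right_fderiv, L.comp_fderiv] at h
  exact congrArg (fun T : F →L[𝕜] F => T w) h

theorem linear_ODE_solution_unique_of_mem_Icc_right {E : Type*} [NormedAddCommGroup E]
    [NormedSpace ℝ E] {A : ℝ → E →L[ℝ] E} {a b : ℝ} (hA : ContinuousOn A (Set.Icc a b))
    {f g : ℝ → E} (hf : ∀ t ∈ Set.Icc a b, HasDerivAt f (A t (f t)) t)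
    (hg : ∀ t ∈ Set.Icc a b, HasDerivAt g (A t (g t)) t) (ha : f a = g a) :
    Set.EqOn f g (Set.Icc a b) := by
  obtain ⟨C, hC⟩ := isCompact_Icc.exists_bound_of_continuousOn hA
  have hlip : ∀ t ∈ Set.Ico a b, LipschitzOnWith C.toNNReal (A t) Set.univ := fun t ht =>
    ((A t).lipschitz.weaken
      (by simpa using Real.toNNReal_mono (hC t (Set.Ico_subset_Icc_self ht)))).lipschitzOnWith
  exact ODE_solution_unique_of_mem_Icc_right hlip
    (fun t ht => (hf t ht).continuousAt.continuousWithinAt)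
    (fun t ht => (hf t (Set.Ico_subset_Icc_self ht)).hasDerivWithinAt) (fun _ _ => trivial)
    (fun t ht => (hg t ht).continuousAt.continuousWithinAt)
    (fun t ht => (hg t (Set.Ico_subset_Icc_self ht)).hasDerivWithinAt) (fun _ _ => trivial) ha

section InnerProductSpace

variable {E : Type*} [NormedAddCommGroup E] [InnerProductSpace ℝ E] [CompleteSpace E]

theorem gradient_comp_linearIsometryEquiv (L : E ≃ₗᵢ[ℝ] E) (f : E → ℝ) (y : E) :
    gradient (f ∘ L) y = L.symm (gradient f (L y)) := by
  refine ext_inner_right ℝ fun w => ?_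
  have hD : fderiv ℝ (f ∘ L) y = (fderiv ℝ f (L y)).comp (L : E →L[ℝ] E) :=
    L.toContinuousLinearEquiv.comp_right_fderiv
  rw [inner_gradient_left, hD, ← L.inner_map_map, L.apply_symm_apply, inner_gradient_left]
  rfl

theorem gradient_apply_linearIsometryEquiv_of_invariant (L : E ≃ₗᵢ[ℝ] E) {f : E → ℝ}
    (hf : ∀ y, f (L y) = f y) (y : E) : gradient f (L y) = L (gradient f y) := by
  have h := gradient_comp_linearIsometryEquiv L f y
  rw [show f ∘ L = f from funext hf] at h
  rw [h, L.apply_symm_apply]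

theorem ContDiff.gradient {f : E → ℝ} {n : WithTop ℕ∞} (hf : ContDiff ℝ (n + 1) f) :
    ContDiff ℝ n (gradient f) :=
  (InnerProductSpace.toDual ℝ E).symm.contDiff.comp (contDiff_succ_iff_fderiv.mp hf).2.2

theorem variational_solution_shift (L : E ≃ₗᵢ[ℝ] E) (J : E →L[ℝ] E)
    (hJL : ∀ v, J (L v) = L (J v)) {H : E → ℝ} (hH : ContDiff ℝ 2 H)
    (hHL : ∀ y, H (L y) = H y) {x : ℝ → E} (hx : Continuous x)
    (hxL : ∀ t, x (t + 1) = L (x t)) {z w : ℝ → E}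
    (hz : ∀ t, HasDerivAt z (J (fderiv ℝ (gradient H) (x t) (z t))) t)
    (hw : ∀ t, HasDerivAt w (J (fderiv ℝ (gradient H) (x t) (w t))) t)
    (h1 : z 1 = L (w 0)) {t : ℝ} (ht : 0 ≤ t) : z (t + 1) = L (w t) := by
  have hHess : ∀ y v, fderiv ℝ (gradient H) (L y) (L v) = L (fderiv ℝ (gradient H) y v) :=
    fderiv_apply_equiv_of_commute L.toContinuousLinearEquiv
      (gradient_apply_linearIsometryEquiv_of_invariant L hHL)
  have hA : Continuous fun τ => J ∘L fderiv ℝ (gradient H) (x (τ + 1)) :=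
    (ContinuousLinearMap.compL ℝ E E E J).continuous.comp
      ((hH.gradient (n := 1)).continuous_fderiv one_ne_zero |>.comp (by fun_prop))
  refine linear_ODE_solution_unique_of_mem_Icc_right (a := 0) (b := t) (g := fun τ => L (w τ))
    hA.continuousOn (fun τ _ => (hz (τ + 1)).comp_add_const τ 1) (fun τ _ => ?_)
    (by rwa [zero_add]) ⟨ht, le_rfl⟩
  have h : HasDerivAt (fun τ => L (w τ)) (L (J (fderiv ℝ (gradient H) (x τ) (w τ)))) τ :=
    (L : E →L[ℝ] E).hasFDerivAt.comp_hasDerivAt τ (hw τ)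
  rwa [← hJL, ← hHess, ← hxL] at h

end InnerProductSpace

theorem stmt10_general (n : ℕ)
    (J P : Matrix (Fin n ⊕ Fin n) (Fin n ⊕ Fin n) ℝ)
    (horth : Pᵀ * P = 1) (hsymp : Pᵀ * J * P = J)
    (H : EuclideanSpace ℝ (Fin n ⊕ Fin n) → ℝ)
    (hH : ContDiff ℝ 2 H)
    (hinvar : ∀ y : EuclideanSpace ℝ (Fin n ⊕ Fin n), H (Matrix.toEuclideanLin P y) = H y)
    (x : ℝ → EuclideanSpace ℝ (Fin n ⊕ Fin n))
    (hx : ∀ t : ℝ, HasDerivAt x (Matrix.toEuclideanLin J (gradient H (x t))) t)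
    (hxper : ∀ t : ℝ, x (t + 1) = Matrix.toEuclideanLin P (x t))
    (γ : ℝ → Matrix (Fin n ⊕ Fin n) (Fin n ⊕ Fin n) ℝ)
    (hγ0 : γ 0 = 1)
    (hγ : ∀ c : EuclideanSpace ℝ (Fin n ⊕ Fin n), ∀ t : ℝ,
      HasDerivAt (fun τ => Matrix.toEuclideanLin (γ τ) c)
        (Matrix.toEuclideanLin J
          (fderiv ℝ (gradient H) (x t) (Matrix.toEuclideanLin (γ t) c))) t) :
    ∀ t : ℝ, 0 ≤ t → γ (t + 1) = P * γ t * P⁻¹ * γ 1 := by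
  intro t ht
  have hPPt : P * Pᵀ = 1 := mul_eq_one_comm.mp horth
  have hPinv : P⁻¹ = Pᵀ := inv_eq_left_inv horth
  have hJP : J * P = P * J := by
    simpa only [← Matrix.mul_assoc, hPPt, Matrix.one_mul] using congrArg (P * ·) hsymp
  have hPunit : P ∈ unitary (Matrix (Fin n ⊕ Fin n) (Fin n ⊕ Fin n) ℝ) := by
    rwa [← Matrix.unitaryGroup, mem_unitaryGroup_iff', star_eq_conjTranspose,
      conjTranspose_eq_transpose_of_trivial]
  let L := Unitary.linearIsometryEquiv ⟨toEuclideanCLM (𝕜 := ℝ) P, Unitary.map_mem _ hPunit⟩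
  have hL : ∀ v, L v = toEuclideanLin P v := fun _ => rfl
  refine toEuclideanLin.injective (LinearMap.ext fun c => ?_)
  have hJL : ∀ v, toEuclideanCLM (𝕜 := ℝ) J (L v) = L (toEuclideanCLM (𝕜 := ℝ) J v) := by
    intro v
    have h := congrArg (fun A => toEuclideanLin A v) hJP
    simp only [toLpLin_mul_same, LinearMap.comp_apply] at h
    exact h
  have h1 :
      toEuclideanLin (γ 1) c = L (toEuclideanLin (γ 0) (toEuclideanLin (P⁻¹ * γ 1) c)) := by
    rw [hL, hγ0, toLpLin_one, LinearMap.id_apply, ← LinearMap.comp_apply, ← toLpLin_mul_same,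
      ← Matrix.mul_assoc, hPinv, hPPt, Matrix.one_mul]
  have h := variational_solution_shift L (toEuclideanCLM (𝕜 := ℝ) J) hJL hH hinvar
    (continuous_iff_continuousAt.mpr fun t => (hx t).continuousAt) hxper
    (hγ c) (hγ (toEuclideanLin (P⁻¹ * γ 1) c)) h1 ht
  simpa only [hL, toLpLin_mul_same, LinearMap.comp_apply] using h

theorem stmt10 (n : ℕ)
    (J P : Matrix (Fin n ⊕ Fin n) (Fin n ⊕ Fin n) ℝ)
    (hJ : J = Matrix.fromBlocks 0 (-1) 1 0)
    (horth : Pᵀ * P = 1) (hsymp : Pᵀ * J * P = J)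
    (H : EuclideanSpace ℝ (Fin n ⊕ Fin n) → ℝ)
    (hH : ContDiff ℝ 2 H)
    (hinvar : ∀ y : EuclideanSpace ℝ (Fin n ⊕ Fin n), H (Matrix.toEuclideanLin P y) = H y)
    (x : ℝ → EuclideanSpace ℝ (Fin n ⊕ Fin n))
    (hx : ∀ t : ℝ, HasDerivAt x (Matrix.toEuclideanLin J (gradient H (x t))) t)
    (hxper : ∀ t : ℝ, x (t + 1) = Matrix.toEuclideanLin P (x t))
    (γ : ℝ → Matrix (Fin n ⊕ Fin n) (Fin n ⊕ Fin n) ℝ)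
    (hγ0 : γ 0 = 1)
    (hγ : ∀ c : EuclideanSpace ℝ (Fin n ⊕ Fin n), ∀ t : ℝ,
      HasDerivAt (fun τ => Matrix.toEuclideanLin (γ τ) c)
        (Matrix.toEuclideanLin J
          (fderiv ℝ (gradient H) (x t) (Matrix.toEuclideanLin (γ t) c))) t) :
    ∀ t : ℝ, 0 ≤ t → γ (t + 1) = P * γ t * P⁻¹ * γ 1 :=
  stmt10_general n J P horth hsymp H hH hinvar x hx hxper γ hγ0 hγ
end
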